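/- arXiv:cs/0602032 — 2 statements merged into one kernel-verified Lean document; each statement's English description precedes it below -/
import Mathlib

section
/- The Shannon entropy function H: Δₙ → [0, log n] is δ-contractive: for all probability measures p, q on {1,...,n}, |H(p) − H(q)| ≤ δ(p,q), where δ is the logarithmic dispersion. -/
open scoped BigOperators
open Classical Filter

/-- Shannon entropy (base-2 logarithms), with the convention 0 · log(1/0) = 0. -/
noncomputable def shannonEntropy {Ω : Type*} [Fintype Ω] (p : Ω → ℝ) : ℝ :=
  ∑ w, (if p w = 0 then 0 else p w * Real.logb 2 (p w)⁻¹)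

/-- `p` is a probability measure on the finite set `Ω`. -/
def IsProbVec {Ω : Type*} [Fintype Ω] (p : Ω → ℝ) : Prop :=
  (∀ w, 0 ≤ p w) ∧ ∑ w, p w = 1

/-- `A` is a nonnegative column-stochastic matrix mapping `p` to `q` with at most `m`
nonzero entries in each row and in each column. -/
def DispWitness {Ω : Type*} [Fintype Ω] (m : ℕ) (A : Matrix Ω Ω ℝ) (p q : Ω → ℝ) : Prop :=
  (∀ i j, 0 ≤ A i j) ∧ (∀ j, ∑ i, A i j = 1) ∧ A.mulVec p = q ∧
  (∀ i, (Finset.univ.filter fun j => A i j ≠ 0).card ≤ m) ∧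
  (∀ j, (Finset.univ.filter fun i => A i j ≠ 0).card ≤ m)

/-- Logarithmic dispersion δ(p,q) = log m for the least witness bound m. -/
noncomputable def logDisp {Ω : Type*} [Fintype Ω] (p q : Ω → ℝ) : ℝ :=
  Real.logb 2 ((sInf {m : ℕ | 0 < m ∧ ∃ A, DispWitness m A p q} : ℕ) : ℝ)

/-- The empirical distribution of the first `n` disjoint `l`-blocks of `S`. -/
noncomputable def blockFreq (k l : ℕ) (S : ℕ → Fin k) (n : ℕ) : (Fin l → Fin k) → ℝ :=
  fun w => (((Finset.range n).filter fun j => ∀ t : Fin l, S (j * l + (t : ℕ)) = w t).card : ℝ) / n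

/-- Finite-state dimension via block entropy rates. -/
noncomputable def dimFS (k : ℕ) (S : ℕ → Fin k) : ℝ :=
  ⨅ l : ℕ+, (1 / ((l : ℝ) * Real.logb 2 k)) *
    Filter.liminf (fun n => shannonEntropy (blockFreq k l S n)) Filter.atTop

/-- Finite-state strong dimension via block entropy rates. -/
noncomputable def DimFS (k : ℕ) (S : ℕ → Fin k) : ℝ :=
  ⨅ l : ℕ+, (1 / ((l : ℝ) * Real.logb 2 k)) *
    Filter.limsup (fun n => shannonEntropy (blockFreq k l S n)) Filter.atTop

/-- `S` is a base-`k` expansion of the real number `x ∈ [0,1]`. -/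
def IsExpansion (k : ℕ) (S : ℕ → Fin k) (x : ℝ) : Prop :=
  x = ∑' n : ℕ, (S n : ℝ) / (k : ℝ) ^ (n + 1)

/-!
If `A p = q` with `A` column-stochastic and at most `m` nonzero entries per row and column, then
`P i j = A i j * p j` is a joint distribution with column marginal `p`, row marginal `q`, and at
most `m` atoms in every row and every column. A marginal never has more entropy than the joint
distribution, and by Jensen's inequality for the concave `x ↦ -x log x` each row of `P` adds at
most `log m` to the entropy of the row marginal. Hence `H(p) ≤ H(P) ≤ H(q) + log m`, and
symmetrically with rows and columns exchanged. A minimal witness exists since the rank-one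
matrix `q 1ᵀ` is a witness.
-/

open Finset Real

lemma mul_log_le_mul_log_of_le {x y : ℝ} (hx : 0 ≤ x) (hxy : x ≤ y) :
    x * log x ≤ x * log y := by
  rcases hx.eq_or_lt with rfl | hx
  · simp
  · gcongr

lemma negMulLog_sum_le_sum_negMulLog {ι : Type*} (s : Finset ι) {x : ι → ℝ}
    (hx : ∀ i ∈ s, 0 ≤ x i) : negMulLog (∑ i ∈ s, x i) ≤ ∑ i ∈ s, negMulLog (x i) := by
  simp only [negMulLog_eq_neg, sum_neg_distrib, neg_le_neg_iff, sum_mul]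
  exact sum_le_sum fun i hi => mul_log_le_mul_log_of_le (hx i hi) (single_le_sum hx hi)

lemma sum_negMulLog_le_negMulLog_sum_add_mul_log {ι : Type*} (s : Finset ι) {x : ι → ℝ}
    (hx : ∀ i ∈ s, 0 ≤ x i) {m : ℕ} (hs : #s ≤ m) :
    ∑ i ∈ s, negMulLog (x i) ≤ negMulLog (∑ i ∈ s, x i) + (∑ i ∈ s, x i) * log m := by
  rcases s.eq_empty_or_nonempty with rfl | hne
  · simp
  set k : ℝ := ((#s : ℕ) : ℝ)
  set c := ∑ i ∈ s, x i
  have hk : 0 < k := by simpa [k] using hne.card_pos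
  have jensen : ∑ i ∈ s, k⁻¹ • negMulLog (x i) ≤ negMulLog (∑ i ∈ s, k⁻¹ • x i) :=
    concaveOn_negMulLog.le_map_sum (fun _ _ => by positivity)
      (by simp [k, hk.ne']) (fun i hi => Set.mem_Ici.mpr (hx i hi))
  have hmean : negMulLog (∑ i ∈ s, k⁻¹ • x i) = k⁻¹ * (negMulLog c + c * log k) := by
    rw [← smul_sum, smul_eq_mul, mul_comm, negMulLog_mul]
    simp only [negMulLog, log_inv]
    ring
  have hlog : log k ≤ log m := log_le_log hk (by simp only [k]; exact_mod_cast hs)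
  have hc : 0 ≤ c := sum_nonneg hx
  rw [← smul_sum, smul_eq_mul, hmean, mul_le_mul_iff_right₀ (inv_pos.mpr hk)] at jensen
  nlinarith

lemma sum_negMulLog_le_negMulLog_sum_add_mul_log_of_card_support_le {κ : Type*} [Fintype κ]
    {x : κ → ℝ} (hx : ∀ j, 0 ≤ x j) {m : ℕ} (hm : #{j | x j ≠ 0} ≤ m) :
    ∑ j, negMulLog (x j) ≤ negMulLog (∑ j, x j) + (∑ j, x j) * log m := by
  have h := sum_negMulLog_le_negMulLog_sum_add_mul_log _ (fun j _ => hx j) hm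
  rwa [sum_filter_ne_zero,
    sum_filter_of_ne (p := fun j => x j ≠ 0) fun j _ hj hx0 => hj (by rw [hx0, negMulLog_zero])] at h

lemma sum_negMulLog_colSum_le {ι κ : Type*} [Fintype ι] [Fintype κ] {P : ι → κ → ℝ}
    (hP : ∀ i j, 0 ≤ P i j) {m : ℕ} (hrow : ∀ i, #{j | P i j ≠ 0} ≤ m) :
    ∑ j, negMulLog (∑ i, P i j) ≤
      ∑ i, negMulLog (∑ j, P i j) + (∑ i, ∑ j, P i j) * log m :=
  calc ∑ j, negMulLog (∑ i, P i j)
      ≤ ∑ j, ∑ i, negMulLog (P i j) :=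
        sum_le_sum fun j _ => negMulLog_sum_le_sum_negMulLog _ fun i _ => hP i j
    _ = ∑ i, ∑ j, negMulLog (P i j) := sum_comm
    _ ≤ ∑ i, (negMulLog (∑ j, P i j) + (∑ j, P i j) * log m) :=
        sum_le_sum fun i _ =>
          sum_negMulLog_le_negMulLog_sum_add_mul_log_of_card_support_le (hP i) (hrow i)
    _ = ∑ i, negMulLog (∑ j, P i j) + (∑ i, ∑ j, P i j) * log m := by
        rw [sum_add_distrib, sum_mul]

lemma shannonEntropy_eq_sum_negMulLog {Ω : Type*} [Fintype Ω] (p : Ω → ℝ) :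
    shannonEntropy p = (∑ w, negMulLog (p w)) / log 2 := by
  rw [shannonEntropy, sum_div]
  refine sum_congr rfl fun w _ => ?_
  split_ifs with h
  · simp [h]
  · simp only [negMulLog, logb, log_inv]
    ring

lemma IsProbVec.nonempty {Ω : Type*} [Fintype Ω] {p : Ω → ℝ} (hp : IsProbVec p) :
    Nonempty Ω := by
  by_contra h
  rw [not_nonempty_iff] at h
  simpa using hp.2

lemma dispWitness_card_of_isProbVec {Ω : Type*} [Fintype Ω] {p q : Ω → ℝ} (hp : IsProbVec p)
    (hq : IsProbVec q) : DispWitness (Fintype.card Ω) (Matrix.of fun i _ => q i) p q :=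
  ⟨fun i _ => hq.1 i, fun _ => hq.2,
    by ext i; simp [Matrix.mulVec, dotProduct, ← mul_sum, hp.2],
    fun _ => card_le_univ _, fun _ => card_le_univ _⟩

lemma DispWitness.abs_sub_shannonEntropy_le {Ω : Type*} [Fintype Ω] {m : ℕ}
    {A : Matrix Ω Ω ℝ} {p q : Ω → ℝ} (hA : DispWitness m A p q) (hp : IsProbVec p) :
    |shannonEntropy p - shannonEntropy q| ≤ logb 2 m := by
  obtain ⟨hA0, hAcol, rfl, hArowCard, hAcolCard⟩ := hA
  set P : Ω → Ω → ℝ := fun i j => A i j * p j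
  have hP : ∀ i j, 0 ≤ P i j := fun i j => mul_nonneg (hA0 i j) (hp.1 j)
  have hcolSum : ∀ j, ∑ i, P i j = p j := fun j => by simp only [P, ← sum_mul, hAcol, one_mul]
  have hrowSum : ∀ i, ∑ j, P i j = A.mulVec p i := fun _ => rfl
  have htotal : ∑ i, ∑ j, P i j = 1 := by rw [sum_comm]; simp only [hcolSum, hp.2]
  have hsupp : ∀ i j, P i j ≠ 0 → A i j ≠ 0 := fun i j h h0 => h (by simp [P, h0])
  have hProw : ∀ i, #{j | P i j ≠ 0} ≤ m := fun i =>
    (card_le_card (monotone_filter_right _ fun j _ => hsupp i j)).trans (hArowCard i)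
  have hPcol : ∀ j, #{i | P i j ≠ 0} ≤ m := fun j =>
    (card_le_card (monotone_filter_right _ fun i _ => hsupp i j)).trans (hAcolCard j)
  have h₁ := sum_negMulLog_colSum_le hP hProw
  have h₂ := sum_negMulLog_colSum_le (P := fun j i => P i j) (fun j i => hP i j) hPcol
  rw [sum_comm (f := fun j i => P i j)] at h₂
  rw [htotal, one_mul] at h₁ h₂
  simp only [hcolSum, hrowSum] at h₁ h₂
  rw [shannonEntropy_eq_sum_negMulLog, shannonEntropy_eq_sum_negMulLog, ← sub_div, abs_div,
    abs_of_pos (log_pos one_lt_two), logb]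
  gcongr
  exact abs_sub_le_iff.mpr ⟨by linarith, by linarith⟩

theorem entropy_logDisp_contractive_general (n : ℕ) (p q : Fin n → ℝ)
    (hp : IsProbVec p) (hq : IsProbVec q) :
    |shannonEntropy p - shannonEntropy q| ≤ logDisp p q := by
  have : Nonempty (Fin n) := hp.nonempty
  obtain ⟨-, A, hA⟩ := Nat.sInf_mem (s := {m : ℕ | 0 < m ∧ ∃ A, DispWitness m A p q})
    ⟨_, Fintype.card_pos, _, dispWitness_card_of_isProbVec hp hq⟩
  exact hA.abs_sub_shannonEntropy_le hp

theorem entropy_logDisp_contractive (n : ℕ) (hn : 0 < n) (p q : Fin n → ℝ)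
    (hp : IsProbVec p) (hq : IsProbVec q) :
    |shannonEntropy p - shannonEntropy q| ≤ logDisp p q :=
  entropy_logDisp_contractive_general n p q hp hq
end

section
/- Let k ≥ 2 and m ≥ 1 be integers and α ≥ 0 a real number. Then the base-k expansions of the fractional parts of α and mα satisfy: for all positive integers l and n, δ(π_{α,n}^{(l)}, π_{mα,n}^{(l)}) ≤ log(m²(s+1)), where s is the sum of the base-k digits of m and δ is the logarithmic dispersion on probability measures on Σ^l. -/
open scoped BigOperators
open Classical Filter

/-!
Put `x = fract α` and `y = fract (m α) = m x - e` with `e ∈ ℤ`, and let `a_N, b_N ∈ [0, 1]` be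
the values of the tails of `S` and `T` after `N` digits. The carry `c_N = m a_N - b_N` is an
integer in `[-1, m]`, and even in a window of `m + 1` consecutive integers: `c_N = -1` forces the
tail of `T` to be `(k-1)(k-1)…` from `N` on, `c_N = m` forces it to vanish from `N` on. Reading
`l`-blocks as base-`k` numerals, the `j`-th block of `T` is congruent to `m` times the `j`-th
block of `S` plus `c_{(j+1)l}` modulo `k^l`. Hence corresponding blocks are related by a relation
in which a block of `S` has at most `m + 1` partners and a block of `T` at most `(m + 1) m` (the
kernel of multiplication by `m` modulo `k^l` has at most `m` elements), and the empirical
conditional law of the `T`-block given the `S`-block witnesses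
`δ ≤ log ((m + 1) m) ≤ log (m² (s + 1))`.
-/

open Finset

section Digits

variable {k : ℕ}

lemma IsExpansion.eq_ofDigits {S : ℕ → Fin k} {x : ℝ} (h : IsExpansion k S x) :
    x = Real.ofDigits S := by
  simpa only [IsExpansion, Real.ofDigits, Real.ofDigitsTerm, div_eq_mul_inv] using h

def digitPrefix (S : ℕ → Fin k) : ℕ → ℕ
  | 0 => 0
  | N + 1 => k * digitPrefix S N + S N

noncomputable def digitTail (S : ℕ → Fin k) (N : ℕ) : ℝ :=
  Real.ofDigits fun i => S (i + N)

lemma digitTail_mem_Icc (S : ℕ → Fin k) (N : ℕ) : digitTail S N ∈ Set.Icc 0 1 :=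
  ⟨Real.ofDigits_nonneg _, Real.ofDigits_le_one _⟩

lemma natCast_mul_digitTail (S : ℕ → Fin k) (N : ℕ) :
    (k : ℝ) * digitTail S N = (S N : ℕ) + digitTail S (N + 1) := by
  have hk : (k : ℝ) ≠ 0 := by exact_mod_cast (S 0).pos.ne'
  rw [digitTail, Real.ofDigits_eq_sum_add_ofDigits _ 1]
  simp only [range_one, sum_singleton, Real.ofDigitsTerm, digitTail, pow_one, zero_add,
    add_right_comm _ 1 N, add_assoc]
  field_simp

lemma pow_mul_ofDigits (S : ℕ → Fin k) (N : ℕ) :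
    (k : ℝ) ^ N * Real.ofDigits S = digitPrefix S N + digitTail S N := by
  induction N with
  | zero => simp [digitPrefix, digitTail]
  | succ N ih =>
    rw [pow_succ', mul_assoc, ih, mul_add, natCast_mul_digitTail, digitPrefix]
    push_cast
    ring

lemma digitTail_eq_zero_of_le {S : ℕ → Fin k} {N N' : ℕ} (h : digitTail S N = 0)
    (hN : N ≤ N') : digitTail S N' = 0 := by
  induction N', hN using Nat.le_induction with
  | base => exact h
  | succ N' _ ih =>
    have hrec := natCast_mul_digitTail S N'
    rw [ih, mul_zero] at hrec
    have := (digitTail_mem_Icc S (N' + 1)).1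
    have : (0 : ℝ) ≤ S N' := by positivity
    linarith

lemma digitTail_eq_one_of_le {S : ℕ → Fin k} {N N' : ℕ} (h : digitTail S N = 1)
    (hN : N ≤ N') : digitTail S N' = 1 := by
  induction N', hN using Nat.le_induction with
  | base => exact h
  | succ N' _ ih =>
    have hrec := natCast_mul_digitTail S N'
    rw [ih, mul_one] at hrec
    have := (digitTail_mem_Icc S (N' + 1)).2
    have : ((S N' : ℕ) : ℝ) + 1 ≤ k := by exact_mod_cast (S N').isLt
    linarith

def block (l : ℕ) (S : ℕ → Fin k) (j : ℕ) : Fin l → Fin k :=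
  fun t => S (j * l + t)

def blockEquiv (k l : ℕ) : (Fin l → Fin k) ≃ Fin (k ^ l) :=
  (Fin.revPerm.arrowCongr (Equiv.refl _)).trans finFunctionFinEquiv

lemma blockEquiv_apply {l : ℕ} (w : Fin l → Fin k) :
    (blockEquiv k l w : ℕ) = ∑ i : Fin l, (w (Fin.rev i) : ℕ) * k ^ (i : ℕ) := by
  simp [blockEquiv]

lemma digitPrefix_add (S : ℕ → Fin k) (N L : ℕ) :
    digitPrefix S (N + L) =
      k ^ L * digitPrefix S N + ∑ i : Fin L, (S (N + Fin.rev i) : ℕ) * k ^ (i : ℕ) := by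
  induction L with
  | zero => simp
  | succ L ih =>
    rw [← add_assoc, digitPrefix, ih, Fin.sum_univ_succ, mul_add, mul_sum]
    simp only [Fin.rev_zero, Fin.rev_succ, Fin.val_last, Fin.val_castSucc, Fin.val_succ,
      Fin.val_zero, pow_zero, mul_one, pow_succ', mul_left_comm _ k]
    ring

lemma digitPrefix_block (S : ℕ → Fin k) (l j : ℕ) :
    digitPrefix S (j * l + l) = k ^ l * digitPrefix S (j * l) + blockEquiv k l (block l S j) := by
  rw [digitPrefix_add, blockEquiv_apply]
  rfl

end Digits

section Carry

variable {k : ℕ}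

/-- By `carry_eq`, this is `m a_N - b_N` for the tails `a_N`, `b_N` of `S` and `T` after `N`
digits: the carry into digit `N` when `y = m x - e` is computed from the digits of `x`. -/
def carry (S T : ℕ → Fin k) (m : ℕ) (e : ℤ) (N : ℕ) : ℤ :=
  e * k ^ N + digitPrefix T N - m * digitPrefix S N

lemma carry_eq {S T : ℕ → Fin k} {x y : ℝ} {m : ℕ} {e : ℤ} (hS : IsExpansion k S x)
    (hT : IsExpansion k T y) (hxy : y = m * x - e) (N : ℕ) :
    (carry S T m e N : ℝ) = m * digitTail S N - digitTail T N := by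
  have hSN := pow_mul_ofDigits S N
  have hTN := pow_mul_ofDigits T N
  rw [← hS.eq_ofDigits] at hSN
  rw [← hT.eq_ofDigits, hxy] at hTN
  simp only [carry]
  push_cast
  linear_combination (m : ℝ) * hSN - hTN

lemma block_modEq_carry (S T : ℕ → Fin k) (m : ℕ) (e : ℤ) (l j : ℕ) :
    ((blockEquiv k l (block l T j) : ℕ) : ℤ) ≡
      m * (blockEquiv k l (block l S j) : ℕ) + carry S T m e (j * l + l) [ZMOD k ^ l] := by
  refine Int.modEq_iff_dvd.2 ⟨carry S T m e (j * l), ?_⟩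
  simp only [carry, digitPrefix_block, pow_add]
  push_cast
  ring

lemma exists_carry_window {S T : ℕ → Fin k} {m : ℕ} {c : ℕ → ℤ}
    (hc : ∀ N, (c N : ℝ) = m * digitTail S N - digitTail T N) :
    ∃ d₀ : ℤ, ∀ N, c N ∈ Icc d₀ (d₀ + m) := by
  have hbounds : ∀ N, 0 ≤ (m : ℝ) * digitTail S N ∧ (m : ℝ) * digitTail S N ≤ m ∧
      0 ≤ digitTail T N ∧ digitTail T N ≤ 1 := fun N =>
    ⟨mul_nonneg m.cast_nonneg (digitTail_mem_Icc S N).1,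
      mul_le_of_le_one_right m.cast_nonneg (digitTail_mem_Icc S N).2,
      (digitTail_mem_Icc T N).1, (digitTail_mem_Icc T N).2⟩
  have hmem : ∀ N, -1 ≤ c N ∧ c N ≤ m := fun N => by
    have hN : (-1 : ℝ) ≤ c N ∧ (c N : ℝ) ≤ m := by
      constructor <;> linarith [hc N, hbounds N]
    exact_mod_cast hN
  -- Both tail values below persist along the expansion, so they cannot both occur.
  have htail_one : ∀ N, c N = -1 → digitTail T N = 1 := fun N h => by
    have hN := hc N
    rw [h] at hN
    push_cast at hN
    linarith [hbounds N]
  have htail_zero : ∀ N, c N = m → digitTail T N = 0 := fun N h => by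
    have hN := hc N
    rw [h] at hN
    push_cast at hN
    linarith [hbounds N]
  by_cases hneg : ∃ N, c N = -1
  · obtain ⟨N₁, hN₁⟩ := hneg
    refine ⟨-1, fun N => ?_⟩
    have hne : c N ≠ m := fun hN => by
      have h1 := digitTail_eq_one_of_le (htail_one N₁ hN₁) (le_max_left N₁ N)
      rw [digitTail_eq_zero_of_le (htail_zero N hN) (le_max_right N₁ N)] at h1
      exact zero_ne_one h1
    have := hmem N
    rw [mem_Icc]
    omega
  · refine ⟨0, fun N => ?_⟩
    have := hmem N
    have := not_exists.1 hneg N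
    rw [mem_Icc]
    omega

end Carry

section Coupling

variable {Ω : Type*}

noncomputable def empFreq (X : ℕ → Ω) (n : ℕ) (w : Ω) : ℝ :=
  (#{j ∈ range n | X j = w} : ℝ) / n

noncomputable def pairCount (X Y : ℕ → Ω) (n : ℕ) (x y : Ω) : ℕ :=
  #{j ∈ range n | X j = x ∧ Y j = y}

lemma sum_pairCount_right [Fintype Ω] (X Y : ℕ → Ω) (n : ℕ) (x : Ω) :
    ∑ y, pairCount X Y n x y = #{j ∈ range n | X j = x} := by
  rw [card_eq_sum_card_fiberwise (f := Y) (t := univ) fun _ _ => mem_univ _]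
  simp only [pairCount, filter_filter]

lemma sum_pairCount_left [Fintype Ω] (X Y : ℕ → Ω) (n : ℕ) (y : Ω) :
    ∑ x, pairCount X Y n x y = #{j ∈ range n | Y j = y} := by
  rw [card_eq_sum_card_fiberwise (f := X) (t := univ) fun _ _ => mem_univ _]
  simp only [pairCount, filter_filter, and_comm]

lemma pairCount_eq_zero_of_count_eq_zero [Fintype Ω] {X : ℕ → Ω} (Y : ℕ → Ω) {n : ℕ}
    {x : Ω} (hx : #{j ∈ range n | X j = x} = 0) (y : Ω) : pairCount X Y n x y = 0 := by
  rw [← Nat.le_zero, ← hx, ← sum_pairCount_right X Y n x]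
  exact single_le_sum (fun _ _ => Nat.zero_le _) (mem_univ y)

/-- The empirical conditional law of `Y j` given `X j`; an unseen `x` is sent to `f x`. -/
noncomputable def couplingMatrix (f : Ω → Ω) (X Y : ℕ → Ω) (n : ℕ) : Matrix Ω Ω ℝ :=
  fun y x => if #{j ∈ range n | X j = x} = 0 then (if y = f x then 1 else 0)
    else (pairCount X Y n x y : ℝ) / #{j ∈ range n | X j = x}

variable {f : Ω → Ω} {X Y : ℕ → Ω} {n : ℕ}

lemma couplingMatrix_nonneg (y x : Ω) : 0 ≤ couplingMatrix f X Y n y x := by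
  unfold couplingMatrix
  split_ifs <;> positivity

lemma sum_couplingMatrix [Fintype Ω] (x : Ω) : ∑ y, couplingMatrix f X Y n y x = 1 := by
  by_cases hx : #{j ∈ range n | X j = x} = 0
  · simp [couplingMatrix, hx]
  · simp only [couplingMatrix, hx, if_false, ← sum_div]
    rw [← Nat.cast_sum, sum_pairCount_right]
    exact div_self (by exact_mod_cast hx)

lemma couplingMatrix_mul_count [Fintype Ω] (y x : Ω) :
    couplingMatrix f X Y n y x * #{j ∈ range n | X j = x} = pairCount X Y n x y := by
  by_cases hx : #{j ∈ range n | X j = x} = 0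
  · simp [hx, pairCount_eq_zero_of_count_eq_zero Y hx y]
  · simp only [couplingMatrix, hx, if_false]
    field_simp

lemma couplingMatrix_mulVec [Fintype Ω] :
    (couplingMatrix f X Y n).mulVec (empFreq X n) = empFreq Y n := by
  funext y
  simp only [Matrix.mulVec, dotProduct, empFreq, mul_div_assoc', couplingMatrix_mul_count,
    ← sum_div, ← Nat.cast_sum, sum_pairCount_left]

lemma couplingMatrix_ne_zero {y x : Ω} (h : couplingMatrix f X Y n y x ≠ 0) :
    (#{j ∈ range n | X j = x} = 0 ∧ y = f x) ∨ pairCount X Y n x y ≠ 0 := by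
  unfold couplingMatrix at h
  split_ifs at h with hx hy
  · exact Or.inl ⟨hx, hy⟩
  · exact absurd rfl h
  · exact Or.inr fun h0 => h (by simp [h0])

theorem exists_dispWitness_of_forall_rel [Fintype Ω] (R : Ω → Ω → Prop) (M : ℕ)
    (hsucc : ∀ x, ∃ y, R x y) (hcol : ∀ x, #{y | R x y} ≤ M)
    (hrow : ∀ y, #{x | R x y} ≤ M)
    (X Y : ℕ → Ω) (n : ℕ) (hXY : ∀ j < n, R (X j) (Y j)) :
    ∃ A, DispWitness M A (empFreq X n) (empFreq Y n) := by
  choose f hf using hsucc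
  have hsupp : ∀ y x, couplingMatrix f X Y n y x ≠ 0 → R x y := fun y x h => by
    rcases couplingMatrix_ne_zero h with ⟨-, rfl⟩ | hpair
    · exact hf x
    · obtain ⟨j, hj⟩ := card_ne_zero.1 hpair
      simp only [mem_filter, mem_range] at hj
      exact hj.2.1 ▸ hj.2.2 ▸ hXY j hj.1
  refine ⟨couplingMatrix f X Y n, couplingMatrix_nonneg, sum_couplingMatrix,
    couplingMatrix_mulVec, fun y => ?_, fun x => ?_⟩
  · exact (card_le_card fun x hx => by simpa using hsupp y x (by simpa using hx)).trans (hrow y)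
  · exact (card_le_card fun y hy => by simpa using hsupp y x (by simpa using hy)).trans (hcol x)

end Coupling

lemma logDisp_le_logb {Ω : Type*} [Fintype Ω] {p q : Ω → ℝ} {M : ℕ} {A : Matrix Ω Ω ℝ}
    (hM : 0 < M) (hA : DispWitness M A p q) : logDisp p q ≤ Real.logb 2 M := by
  have hmem : M ∈ {m : ℕ | 0 < m ∧ ∃ A, DispWitness m A p q} := ⟨hM, A, hA⟩
  exact Real.logb_le_logb_of_le one_lt_two (by exact_mod_cast (Nat.sInf_mem ⟨M, hmem⟩).1)
    (by exact_mod_cast Nat.sInf_le hmem)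

section ModRel

variable {Ω : Type*} {N : ℕ}

def ModRel (e : Ω ≃ Fin N) (m : ℕ) (D : Finset ℤ) (x y : Ω) : Prop :=
  ∃ d ∈ D, ((e y : ℕ) : ℤ) ≡ m * (e x : ℕ) + d [ZMOD N]

lemma card_filter_val_modEq_le_one [Fintype Ω] (e : Ω ≃ Fin N) (b : ℤ) :
    #{y | ((e y : ℕ) : ℤ) ≡ b [ZMOD N]} ≤ 1 := by
  refine card_le_one.2 fun y₁ h₁ y₂ h₂ => e.injective (Fin.ext ?_)
  simp only [mem_filter, mem_univ, true_and] at h₁ h₂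
  exact (Int.natCast_modEq_iff.1 (h₁.trans h₂.symm)).eq_of_lt_of_lt (e y₁).2 (e y₂).2

lemma card_filter_mul_val_modEq_le [Fintype Ω] (e : Ω ≃ Fin N) {m : ℕ} (hm : 0 < m)
    (b : ℤ) :
    #{x | (m : ℤ) * (e x : ℕ) ≡ b [ZMOD N]} ≤ m := by
  -- `x ↦ m * e x / N` is injective on this set, since the residue of `m * e x` is fixed.
  refine (card_le_card_of_injOn (t := range m) (fun x => m * e x / N) (fun x _ => ?_) ?_).trans
    (card_range m).le
  · refine mem_range.2 (Nat.div_lt_of_lt_mul ?_)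
    rw [mul_comm N]
    exact Nat.mul_lt_mul_of_pos_left (e x).2 hm
  · intro x₁ h₁ x₂ h₂ hdiv
    simp only [coe_filter, mem_univ, true_and, Set.mem_ofPred_eq] at h₁ h₂
    dsimp only at hdiv
    have hmod : m * e x₁ % N = m * e x₂ % N :=
      Int.natCast_modEq_iff.1 (by push_cast; exact h₁.trans h₂.symm)
    have hmul : m * (e x₁ : ℕ) = m * e x₂ := by
      rw [← Nat.div_add_mod (m * e x₁) N, hdiv, hmod, Nat.div_add_mod]
    exact e.injective (Fin.ext (Nat.eq_of_mul_eq_mul_left hm hmul))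

lemma exists_val_modEq (e : Ω ≃ Fin N) [NeZero N] (b : ℤ) :
    ∃ y, ((e y : ℕ) : ℤ) ≡ b [ZMOD N] := by
  have hN : (0 : ℤ) < N := by exact_mod_cast NeZero.pos N
  have hr := Int.emod_nonneg b hN.ne'
  refine ⟨e.symm ⟨(b % N).toNat, by have := Int.emod_lt_of_pos b hN; omega⟩, ?_⟩
  simpa [Int.toNat_of_nonneg hr] using Int.mod_modEq b N

lemma ModRel.exists_right (e : Ω ≃ Fin N) [NeZero N] (m : ℕ) {D : Finset ℤ} (hD : D.Nonempty)
    (x : Ω) : ∃ y, ModRel e m D x y :=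
  let ⟨d, hd⟩ := hD
  let ⟨y, hy⟩ := exists_val_modEq e (m * (e x : ℕ) + d)
  ⟨y, d, hd, hy⟩

lemma ModRel.card_right_le [Fintype Ω] (e : Ω ≃ Fin N) (m : ℕ) (D : Finset ℤ) (x : Ω) :
    #{y | ModRel e m D x y} ≤ #D :=
  calc #{y | ModRel e m D x y}
      ≤ #(D.biUnion fun d => {y | ((e y : ℕ) : ℤ) ≡ m * (e x : ℕ) + d [ZMOD N]}) :=
        card_le_card fun y hy => by
          simp only [mem_filter, mem_univ, true_and, mem_biUnion] at hy ⊢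
          exact hy
    _ ≤ #D * 1 := card_biUnion_le_card_mul _ _ _ fun d _ => card_filter_val_modEq_le_one e _
    _ = #D := mul_one _

lemma ModRel.card_left_le [Fintype Ω] (e : Ω ≃ Fin N) {m : ℕ} (hm : 0 < m) (D : Finset ℤ)
    (y : Ω) :
    #{x | ModRel e m D x y} ≤ #D * m :=
  calc #{x | ModRel e m D x y}
      ≤ #(D.biUnion fun d => {x | (m : ℤ) * (e x : ℕ) ≡ (e y : ℕ) - d [ZMOD N]}) :=
        card_le_card fun x hx => by
          simp only [mem_filter, mem_univ, true_and, mem_biUnion] at hx ⊢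
          obtain ⟨d, hd, h⟩ := hx
          exact ⟨d, hd, by simpa using (h.sub_right d).symm⟩
    _ ≤ #D * m := card_biUnion_le_card_mul _ _ _ fun d _ => card_filter_mul_val_modEq_le e hm _

end ModRel

lemma one_le_digitSum {k m : ℕ} (hk : 1 < k) (hm : m ≠ 0) :
    1 ≤ ∑ i ∈ range (Nat.log k m + 1), m / k ^ i % k := by
  have hlt : m / k ^ Nat.log k m < k :=
    Nat.div_lt_of_lt_mul (by rw [← pow_succ]; exact Nat.lt_pow_succ_log_self hk m)
  calc 1 ≤ m / k ^ Nat.log k m % k := by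
        rw [Nat.mod_eq_of_lt hlt]
        exact Nat.div_pos (Nat.pow_log_le_self k hm) (by positivity)
    _ ≤ _ := single_le_sum (f := fun i => m / k ^ i % k) (fun _ _ => Nat.zero_le _)
          (self_mem_range_succ _)

lemma blockFreq_eq_empFreq {k : ℕ} (l : ℕ) (S : ℕ → Fin k) (n : ℕ) :
    blockFreq k l S n = empFreq (block l S) n := by
  funext w
  simp only [blockFreq, empFreq, block, funext_iff]

theorem main_lemma_dispersion_bound_general (k m : ℕ) (hk : 2 ≤ k) (hm : 1 ≤ m)
    (α : ℝ)
    (s : ℕ) (hs : s = ∑ i ∈ Finset.range (Nat.log k m + 1), m / k ^ i % k)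
    (S T : ℕ → Fin k)
    (hS : IsExpansion k S (Int.fract α)) (hT : IsExpansion k T (Int.fract ((m : ℝ) * α)))
    (l n : ℕ) :
    logDisp (blockFreq k l S n) (blockFreq k l T n) ≤
      Real.logb 2 ((m : ℝ) ^ 2 * ((s : ℝ) + 1)) := by
  obtain ⟨e, he⟩ := Int.fract_mul_natCast α m
  have hfract : Int.fract ((m : ℝ) * α) = m * Int.fract α - e := by
    rw [mul_comm (m : ℝ) α]
    linarith
  obtain ⟨d₀, hd₀⟩ := exists_carry_window (carry_eq hS hT hfract)
  have hD : #(Icc d₀ (d₀ + m)) = m + 1 := by rw [Int.card_Icc]; omega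
  have : NeZero (k ^ l) := ⟨by positivity⟩
  obtain ⟨A, hA⟩ := exists_dispWitness_of_forall_rel
    (ModRel (blockEquiv k l) m (Icc d₀ (d₀ + m))) ((m + 1) * m)
    (ModRel.exists_right _ m (nonempty_Icc.2 (by omega)))
    (fun x => (ModRel.card_right_le _ m _ x).trans (hD ▸ Nat.le_mul_of_pos_right _ hm))
    (fun y => (ModRel.card_left_le _ hm _ y).trans (hD ▸ le_rfl))
    (block l S) (block l T) n fun j _ => ⟨_, hd₀ (j * l + l), block_modEq_carry S T m e l j⟩
  have hM : (m + 1) * m ≤ m ^ 2 * (s + 1) := by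
    have hs1 : 1 ≤ s := hs ▸ one_le_digitSum hk (by omega)
    nlinarith
  rw [blockFreq_eq_empFreq, blockFreq_eq_empFreq]
  calc _ ≤ Real.logb 2 ((m + 1) * m : ℕ) := logDisp_le_logb (by positivity) hA
    _ ≤ _ := Real.logb_le_logb_of_le one_lt_two (by positivity) (by exact_mod_cast hM)

theorem main_lemma_dispersion_bound (k m : ℕ) (hk : 2 ≤ k) (hm : 1 ≤ m)
    (α : ℝ) (hα : 0 ≤ α)
    (s : ℕ) (hs : s = ∑ i ∈ Finset.range (Nat.log k m + 1), m / k ^ i % k)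
    (S T : ℕ → Fin k)
    (hS : IsExpansion k S (Int.fract α)) (hT : IsExpansion k T (Int.fract ((m : ℝ) * α)))
    (l n : ℕ) (hl : 0 < l) (hn : 0 < n) :
    logDisp (blockFreq k l S n) (blockFreq k l T n) ≤
      Real.logb 2 ((m : ℝ) ^ 2 * ((s : ℝ) + 1)) :=
  main_lemma_dispersion_bound_general k m hk hm α s hs S T hS hT l n
end
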